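/- arXiv:math/0503713 — 3 statements merged into one kernel-verified Lean document; each statement's English description precedes it below -/
import Mathlib

section
/- Let I be a finite type, n ≥ 1 an integer, and a, b, c, e ∈ I. Then the map M ↦ (M^n)_{a,e} on real matrices indexed by I is differentiable in each entry, and its partial derivative with respect to the entry M_{b,c} is ∂(M^n)_{a,e}/∂M_{b,c} = ∑_{k_1 + k_2 = n−1, k_1,k_2 ≥ 0} (M^{k_1})_{a,b} (M^{k_2})_{c,e}. -/
open MeasureTheory ProbabilityTheory Filter Topology

namespace RWDE

/-- Vertices of the lattice `ℤ^d`. -/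
abbrev V (d : ℕ) := Fin d → ℤ

/-- The `2d` directions: `Sum.inl i` stands for `e_i`, `Sum.inr i` for `-e_i`. -/
abbrev Dir (d : ℕ) := Fin d ⊕ Fin d

/-- The `2d` unit vectors of `ℤ^d`. -/
def e (d : ℕ) : Dir d → V d
  | .inl i => Pi.single i 1
  | .inr i => -Pi.single i 1

/-- The direction opposite to a given one. -/
def opp (d : ℕ) : Dir d → Dir d := Sum.swap

/-- The simplex `T_{2d} = {x ∈ (0,1]^{2d} : ∑ x_i = 1}` (over an arbitrary finite index). -/
def simplex (ι : Type*) [Fintype ι] : Set (ι → ℝ) :=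
  {p | (∀ i, 0 < p i ∧ p i ≤ 1) ∧ ∑ i, p i = 1}

/-- The Dirichlet measure of parameter `α`, defined through its classical representation:
it is the law of `(Z_i / ∑ Z_j)_i` where the `Z_i` are independent `Gamma(α_i, 1)` random
variables; this coincides with the measure on `T_{2d}` with density
`Γ(∑α)/∏Γ(α_i) · ∏ x_i^(α_i - 1)` with respect to Lebesgue measure on `(x_1,…,x_{2d-1})`. -/
noncomputable def dirichlet {ι : Type*} [Fintype ι] (α : ι → ℝ) : Measure (ι → ℝ) :=
  (Measure.pi fun i => gammaMeasure (α i) 1).map (fun z i => z i / ∑ j, z j)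

/-- An environment attaches to each site a transition-probability vector over the 2d directions. -/
abbrev Env (d : ℕ) := V d → Dir d → ℝ

/-- `μ` is the product measure `⊗_{x ∈ ℤ^d} λ^α` making the environment i.i.d. Dirichlet:
it is a probability measure whose finite-dimensional marginals are products of `dirichlet α`. -/
def IsIIDDirichlet {d : ℕ} (α : Dir d → ℝ) (μ : Measure (Env d)) : Prop :=
  IsProbabilityMeasure μ ∧
    ∀ (s : Finset (V d)) (A : V d → Set (Dir d → ℝ)), (∀ x ∈ s, MeasurableSet (A x)) →
      μ {ω | ∀ x ∈ s, ω x ∈ A x} = ∏ x ∈ s, dirichlet α (A x)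

/-- The one-step transition weight of the walk in environment `ω` from `u` to `v`. -/
noncomputable def stepWeight (d : ℕ) (ω : Env d) (u v : V d) : ENNReal :=
  ∑ i : Dir d, if v = u + e d i then ENNReal.ofReal (ω u i) else 0

/-- `P` is the annealed law `P^μ = ∫ P^ω dμ(ω)` of the walk started at `0`:
a probability measure on trajectories whose cylinder probabilities are the `μ`-averages of the
quenched cylinder probabilities. -/
def IsAnnealed (d : ℕ) (μ : Measure (Env d)) (P : Measure (ℕ → V d)) : Prop :=
  IsProbabilityMeasure P ∧
    ∀ (n : ℕ) (x : ℕ → V d),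
      P {X | ∀ k ≤ n, X k = x k} =
        if x 0 = 0 then
          ∫⁻ ω, ∏ k ∈ Finset.range n, stepWeight d ω (x k) (x (k + 1)) ∂μ
        else 0

/-- `n`-step kernel of the walk in environment `ω` killed outside `U`: this is the `n`-th power
of the matrix `Ω_U` (rows indexed by sites outside `U`, in particular by `∂U`, are zero). -/
def kernPow (d : ℕ) (ω : Env d) (U : Finset (V d)) : ℕ → V d → V d → ℝ
  | 0, x, y => if x = y then 1 else 0
  | n + 1, x, y => if x ∈ U then ∑ i : Dir d, ω x i * kernPow d ω U n (x + e d i) y else 0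

/-- Real-valued Green function `G_{U,δ}^ω(x,y) = ∑_n δ^n (Ω_U)^n_{x,y}`. -/
noncomputable def greenR (d : ℕ) (ω : Env d) (U : Finset (V d)) (δ : ℝ) (x y : V d) : ℝ :=
  ∑' n : ℕ, δ ^ n * kernPow d ω U n x y

/-- `[0,∞]`-valued (unkilled, `δ = 1`) Green function `G_U^ω(x,y) = ∑_n (Ω_U)^n_{x,y}`. -/
noncomputable def greenE (d : ℕ) (ω : Env d) (U : Finset (V d)) (x y : V d) : ENNReal :=
  ∑' n : ℕ, ENNReal.ofReal (kernPow d ω U n x y)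

/-- `n`-step kernel of the (unkilled) walk on all of `ℤ^d` with transition kernel `q`. -/
def walkPow (d : ℕ) (q : V d → Dir d → ℝ) : ℕ → V d → V d → ℝ
  | 0, x, y => if x = y then 1 else 0
  | n + 1, x, y => ∑ i : Dir d, q x i * walkPow d q n (x + e d i) y

/-- Green function with killing rate `δ` of the walk on `ℤ^d` with transition kernel `q`. -/
noncomputable def greenW (d : ℕ) (q : V d → Dir d → ℝ) (δ : ℝ) (x y : V d) : ℝ :=
  ∑' n : ℕ, δ ^ n * walkPow d q n x y

/-- The symmetrizing function `φ_m(z) = ∏_i (√(m_{e_i}/m_{-e_i}))^{z_i}`. -/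
noncomputable def phi (d : ℕ) (m : Dir d → ℝ) (z : V d) : ℝ :=
  ∏ i : Fin d, Real.sqrt (m (Sum.inl i) / m (Sum.inr i)) ^ (z i)

/-- Kalikow's auxiliary transition probability
`ω̂_{U,δ,z₀}(z, z+e_i) = E_μ[G_{U,δ}^ω(z₀,z) ω(z,z+e_i)] / E_μ[G_{U,δ}^ω(z₀,z)]`. -/
noncomputable def kalikow (d : ℕ) (μ : Measure (Env d)) (U : Finset (V d)) (δ : ℝ)
    (z₀ z : V d) (i : Dir d) : ℝ :=
  (∫ ω, greenR d ω U δ z₀ z * ω z i ∂μ) / ∫ ω, greenR d ω U δ z₀ z ∂μ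

/-- `U` is a connected subset of `ℤ^d`: any two points of `U` are joined by a
nearest-neighbour path staying in `U`. -/
def ConnectedFinset (d : ℕ) (U : Finset (V d)) : Prop :=
  ∀ x ∈ U, ∀ y ∈ U, ∃ (n : ℕ) (p : ℕ → V d), p 0 = x ∧ p n = y ∧
    (∀ k ≤ n, p k ∈ U) ∧ ∀ k < n, ∃ i : Dir d, p (k + 1) = p k + e d i

end RWDE

open RWDE MeasureTheory Filter Topology

/-- Derivative of an entry of the `n`-th power of a matrix with respect to a single entry:
`∂(M^n)_{a,e}/∂M_{b,c} = ∑_{k₁+k₂=n-1} (M^{k₁})_{a,b} (M^{k₂})_{c,e}`. -/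
theorem matrix_pow_entry_hasDerivAt {I : Type*} [Fintype I] [DecidableEq I]
    (n : ℕ) (hn : 1 ≤ n) (M : Matrix I I ℝ) (a b c e : I) :
    HasDerivAt
      (fun t : ℝ => ((M.updateRow b (Function.update (M b) c t)) ^ n) a e)
      (∑ k ∈ Finset.range n, (M ^ k) a b * (M ^ (n - 1 - k)) c e) (M b c) := by
  set N : ℝ → Matrix I I ℝ := fun t => M.updateRow b (Function.update (M b) c t) with hNdef
  have hN0 : N (M b c) = M := by
    ext x y
    by_cases hx : x = b
    · subst hx
      by_cases hy : y = c
      · subst hy; simp [N]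
      · simp [N, Matrix.updateRow_apply, Function.update_of_ne hy]
    · simp [N, Matrix.updateRow_apply, hx]
  have hentry : ∀ (x y : I) (t : ℝ), HasDerivAt (fun t => N t x y)
      (if x = b ∧ y = c then 1 else 0) t := by
    intro x y t
    by_cases hx : x = b
    · by_cases hy : y = c
      · simpa [N, hx, hy, Matrix.updateRow_apply] using (hasDerivAt_id' t)
      · simpa [N, hx, hy, Matrix.updateRow_apply, Function.update_of_ne hy] using
          hasDerivAt_const t (M b y)
    · simpa [N, Matrix.updateRow_apply, hx] using hasDerivAt_const t (M x y)
  have key : ∀ m, 1 ≤ m → ∀ a e : I,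
      HasDerivAt (fun t => ((N t) ^ m) a e)
        (∑ k ∈ Finset.range m, (M ^ k) a b * (M ^ (m - 1 - k)) c e) (M b c) := by
    intro m hm
    induction m, hm using Nat.le_induction with
    | base =>
      intro a e
      have h := hentry a e (M b c)
      have heq : (if a = b ∧ e = c then (1:ℝ) else 0) =
          ∑ k ∈ Finset.range 1, (M ^ k) a b * (M ^ (1 - 1 - k)) c e := by
        simp [Matrix.one_apply]
        by_cases hab : a = b <;> by_cases hec : e = c
        · simp [hab, hec]
        · simp [hab, hec, Ne.symm hec]
        · simp [hab, hec]
        · simp [hab, hec, Ne.symm hec]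
      rw [heq] at h
      simpa [pow_one] using h
    | succ m hm ih =>
      intro a e
      have hfun : (fun t => ((N t) ^ (m + 1)) a e)
          = fun t => ∑ x, ((N t) ^ m) a x * N t x e := by
        funext t
        rw [pow_succ, Matrix.mul_apply]
      rw [hfun]
      have h : HasDerivAt (fun t => ∑ x, ((N t) ^ m) a x * N t x e)
          (∑ x, ((∑ k ∈ Finset.range m, (M ^ k) a b * (M ^ (m - 1 - k)) c x) * M x e
            + (M ^ m) a x * (if x = b ∧ e = c then 1 else 0))) (M b c) := by
        apply HasDerivAt.fun_sum
        intro x _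
        have h1 := (ih a x).fun_mul (hentry x e (M b c))
        simpa [hN0] using h1
      convert h using 1
      rw [Finset.sum_add_distrib]
      have hA : ∑ x, (∑ k ∈ Finset.range m, (M ^ k) a b * (M ^ (m - 1 - k)) c x) * M x e
          = ∑ k ∈ Finset.range m, (M ^ k) a b * (M ^ (m - k)) c e := by
        simp_rw [Finset.sum_mul]
        rw [Finset.sum_comm]
        apply Finset.sum_congr rfl
        intro k hk
        have hk' : k < m := Finset.mem_range.mp hk
        have : m - 1 - k + 1 = m - k := by omega
        rw [← this, pow_succ, Matrix.mul_apply, Finset.mul_sum]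
        apply Finset.sum_congr rfl
        intro x _
        ring
      have hB : ∑ x, (M ^ m) a x * (if x = b ∧ e = c then (1:ℝ) else 0)
          = (M ^ m) a b * (M ^ (m - m)) c e := by
        rw [Finset.sum_eq_single b]
        · by_cases hec : e = c
          · simp [hec, Matrix.one_apply]
          · simp [hec, Matrix.one_apply, Ne.symm hec]
        · intro x _ hx; simp [hx]
        · intro h; exact absurd (Finset.mem_univ b) h
      rw [hA, hB, Finset.sum_range_succ]
      have h1 : ∀ k, m + 1 - 1 - k = m - k := fun k => by omega
      simp_rw [h1]
  exact key n hn a e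
end

section
/- Let α ∈ (0,∞)^{2d} and suppose there exists i ∈ {1,…,2d} with α_i > 1. Then for every finite connected subset U of ℤ^d and every z_0 ∈ U, the Green function G_U^ω(z_0,z_0) is μ-almost surely finite and ∫ G_U^ω(z_0,z_0) dμ(ω) < ∞. -/
open MeasureTheory ProbabilityTheory Filter Topology

open RWDE MeasureTheory Filter Topology


------------------------------------------------------------------------------
-- Auxiliary lemmas
------------------------------------------------------------------------------

section Aux

open MeasureTheory ProbabilityTheory Real Set RWDE

-- ### Lintegral of products over pi measures

lemma RWDE.lintegral_pi_prod_fin {n : ℕ} {X : Type*} [MeasurableSpace X]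
    (μ : Fin n → Measure X) [∀ i, SigmaFinite (μ i)]
    (g : Fin n → X → ENNReal) (hg : ∀ i, Measurable (g i)) :
    ∫⁻ z, ∏ i, g i (z i) ∂Measure.pi μ = ∏ i, ∫⁻ x, g i x ∂μ i := by
  induction n with
  | zero => simp [Measure.pi_univ]
  | succ n ih =>
    have hmp := measurePreserving_piFinSuccAbove μ 0
    have hG : Measurable (fun p : X × (Fin n → X) =>
        g 0 p.1 * ∏ j, g ((0 : Fin (n+1)).succAbove j) (p.2 j)) := by
      exact ((hg 0).comp measurable_fst).mul
        (Finset.measurable_prod _ fun j _ => (hg _).comp ((measurable_pi_apply j).comp measurable_snd))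
    have key : ∫⁻ z, ∏ i, g i (z i) ∂Measure.pi μ
        = ∫⁻ p : X × (Fin n → X), g 0 p.1 * ∏ j, g ((0 : Fin (n+1)).succAbove j) (p.2 j)
            ∂((μ 0).prod (Measure.pi fun j => μ ((0 : Fin (n+1)).succAbove j))) := by
      rw [← hmp.lintegral_comp hG]
      refine lintegral_congr fun z => ?_
      simp [MeasurableEquiv.piFinSuccAbove, Fin.prod_univ_succ, Fin.zero_succAbove, Fin.tail]
    have hg2 : Measurable fun y : Fin n → X => ∏ j, g ((0 : Fin (n+1)).succAbove j) (y j) :=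
      Finset.measurable_prod _ fun j _ => (hg _).comp (measurable_pi_apply j)
    rw [key, lintegral_prod_mul (hg 0).aemeasurable hg2.aemeasurable,
      ih _ _ (fun j => hg _), Fin.prod_univ_succ]
    simp [Fin.zero_succAbove]

lemma RWDE.lintegral_pi_prod {ι : Type*} [Fintype ι] {X : Type*} [MeasurableSpace X]
    (μ : ι → Measure X) [∀ i, SigmaFinite (μ i)]
    (g : ι → X → ENNReal) (hg : ∀ i, Measurable (g i)) :
    ∫⁻ z : ι → X, ∏ i, g i (z i) ∂Measure.pi μ = ∏ i, ∫⁻ x, g i x ∂μ i := by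
  classical
  set e := Fintype.equivFin ι
  have hmp := measurePreserving_piCongrLeft (α := fun _ : ι => X) μ e.symm
  have hG : Measurable fun z : ι → X => ∏ i, g i (z i) :=
    Finset.measurable_prod _ fun i _ => (hg i).comp (measurable_pi_apply i)
  rw [← hmp.lintegral_comp hG]
  have : ∀ w : Fin (Fintype.card ι) → X,
      (∏ i, g i ((MeasurableEquiv.piCongrLeft (fun _ : ι => X) e.symm) w i))
        = ∏ j, g (e.symm j) (w j) := by
    intro w
    rw [← e.symm.prod_comp]
    refine Finset.prod_congr rfl fun j _ => ?_
    congr 1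
    rw [MeasurableEquiv.coe_piCongrLeft]
    exact Equiv.piCongrLeft_apply_apply (fun _ : ι => X) e.symm w j
  simp_rw [this]
  rw [RWDE.lintegral_pi_prod_fin _ _ fun j => hg _, ← e.symm.prod_comp]

-- ### Gamma measure facts

lemma RWDE.gammaMeasure_Iic_zero {a r : ℝ} : gammaMeasure a r (Iic 0) = 0 := by
  rw [gammaMeasure, withDensity_apply _ measurableSet_Iic,
    setLIntegral_congr (Iio_ae_eq_Iic (a := (0:ℝ))).symm,
    setLIntegral_congr_fun_ae measurableSet_Iio
      (ae_of_all _ fun x (hx : x < 0) => gammaPDF_of_neg hx)]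
  simp

lemma RWDE.ae_gamma_pos {a r : ℝ} : ∀ᵐ x ∂gammaMeasure a r, 0 < x := by
  rw [MeasureTheory.ae_iff]
  have : {x : ℝ | ¬ 0 < x} = Iic 0 := by ext x; simp
  rw [this]; exact RWDE.gammaMeasure_Iic_zero

lemma RWDE.ae_pi_gamma_pos {ι : Type*} [Fintype ι] (α : ι → ℝ) (hα : ∀ i, 0 < α i) :
    ∀ᵐ z ∂(Measure.pi fun i => gammaMeasure (α i) 1), ∀ i, 0 < z i := by
  classical
  haveI : ∀ i, IsProbabilityMeasure (gammaMeasure (α i) 1) :=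
    fun i => isProbabilityMeasure_gammaMeasure (hα i) one_pos
  rw [MeasureTheory.ae_all_iff]
  intro i
  rw [MeasureTheory.ae_iff]
  have : {z : ι → ℝ | ¬ 0 < z i} = Set.pi Set.univ (fun j => if j = i then Iic 0 else univ) := by
    ext z
    simp only [Set.mem_pi, Set.mem_univ, true_implies, mem_setOf_eq, not_lt]
    constructor
    · intro h j; by_cases hj : j = i <;> simp [hj, h]
    · intro h; simpa using h i
  rw [this, Measure.pi_pi]
  exact Finset.prod_eq_zero (Finset.mem_univ i) (by simp [RWDE.gammaMeasure_Iic_zero])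

lemma RWDE.lintegral_gamma_lt_top {a : ℝ} {f : ℝ → ℝ}
    (hfm : Measurable f) (hf0 : ∀ x, 0 ≤ x → 0 ≤ f x)
    (hfi : Integrable (fun x => f x * gammaPDFReal a 1 x)) :
    ∫⁻ x, ENNReal.ofReal (f x) ∂gammaMeasure a 1 < ⊤ := by
  have hpdfm : Measurable (gammaPDF a 1) := ENNReal.measurable_ofReal.comp (measurable_gammaPDFReal a 1)
  rw [gammaMeasure, lintegral_withDensity_eq_lintegral_mul _
    hpdfm hfm.ennreal_ofReal]
  have : ∀ x, (ENNReal.ofReal (f x) * gammaPDF a 1 x)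
      = ENNReal.ofReal (f x * gammaPDFReal a 1 x) := by
    intro x
    by_cases hx : 0 ≤ x
    · rw [gammaPDF, ← ENNReal.ofReal_mul (hf0 x hx)]
    · rw [gammaPDF_of_neg (not_le.mp hx)]
      simp [gammaPDFReal, if_neg hx]
  calc ∫⁻ x, (gammaPDF a 1 * fun x => ENNReal.ofReal (f x)) x
      = ∫⁻ x, ENNReal.ofReal (f x * gammaPDFReal a 1 x) := by
        refine lintegral_congr fun x => ?_
        simpa [mul_comm] using this x
    _ < ⊤ := hfi.lintegral_lt_top

lemma RWDE.integrable_mul_gammaPDFReal {a c : ℝ} (hc : 0 < a + c) (hc0 : c ≠ 0) :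
    Integrable (fun x => x ^ c * gammaPDFReal a 1 x) := by
  have hig : IntegrableOn (fun x : ℝ => exp (-x) * x ^ (a + c - 1)) (Ioi 0) :=
    Real.GammaIntegral_convergent hc
  have hig2 : IntegrableOn (fun x : ℝ => x ^ c * gammaPDFReal a 1 x) (Ioi 0) := by
    refine (hig.const_mul (1 ^ a / Real.Gamma a)).congr ?_
    filter_upwards [ae_restrict_mem measurableSet_Ioi] with x hx
    have hx0 : (0:ℝ) < x := hx
    simp only [gammaPDFReal, if_pos hx0.le]
    rw [show a + c - 1 = (a - 1) + c by ring, rpow_add hx0]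
    ring
  have heq : (fun x : ℝ => x ^ c * gammaPDFReal a 1 x)
      = Set.indicator (Ioi 0) (fun x => x ^ c * gammaPDFReal a 1 x) := by
    funext x
    rcases lt_trichotomy x 0 with h | h | h
    · simp [Set.indicator_of_notMem (by simp [Set.mem_Ioi]; linarith : x ∉ Ioi 0),
        gammaPDFReal, if_neg (not_le.mpr h)]
    · subst h
      simp [Set.indicator_of_notMem (by simp : (0:ℝ) ∉ Ioi 0), Real.zero_rpow hc0]
    · simp [Set.indicator_of_mem (by exact h : x ∈ Ioi 0)]
  rw [heq, integrable_indicator_iff measurableSet_Ioi]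
  exact hig2

lemma RWDE.lintegral_rpow_gamma_lt_top {a c : ℝ} (hc : 0 < a + c) (hc0 : c ≠ 0) :
    ∫⁻ x, ENNReal.ofReal (x ^ c) ∂gammaMeasure a 1 < ⊤ := by
  refine RWDE.lintegral_gamma_lt_top (measurable_id.pow_const c) (fun x hx => rpow_nonneg hx c) ?_
  exact RWDE.integrable_mul_gammaPDFReal hc hc0

lemma RWDE.lintegral_ofReal_gamma_lt_top {a : ℝ} (ha : 0 < a) :
    ∫⁻ x, ENNReal.ofReal x ∂gammaMeasure a 1 < ⊤ := by
  have := RWDE.lintegral_rpow_gamma_lt_top (a := a) (c := 1) (by linarith) one_ne_zero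
  simpa [Real.rpow_one] using this

lemma RWDE.lintegral_ofReal_inv_gamma_lt_top {a : ℝ} (ha : 1 < a) :
    ∫⁻ x, ENNReal.ofReal x⁻¹ ∂gammaMeasure a 1 < ⊤ := by
  have h := RWDE.lintegral_rpow_gamma_lt_top (a := a) (c := -1) (by linarith) (by norm_num)
  have : ∫⁻ x, ENNReal.ofReal x⁻¹ ∂gammaMeasure a 1
      = ∫⁻ x, ENNReal.ofReal (x ^ (-1 : ℝ)) ∂gammaMeasure a 1 := by
    refine lintegral_congr_ae ?_
    filter_upwards [RWDE.ae_gamma_pos (a := a) (r := 1)] with x hx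
    rw [Real.rpow_neg_one]
  rw [this]; exact h

-- ### Dirichlet measure facts

variable {ι : Type*} [Fintype ι]

lemma RWDE.measurable_dirichletMap : Measurable (fun (z : ι → ℝ) (i : ι) => z i / ∑ j, z j) :=
  measurable_pi_lambda _ fun i => (measurable_pi_apply i).div
    (Finset.measurable_sum _ fun j _ => measurable_pi_apply j)

lemma RWDE.measurableSet_simplex : MeasurableSet (simplex ι) := by
  have : simplex ι = (⋂ i, {p : ι → ℝ | 0 < p i} ∩ {p | p i ≤ 1}) ∩ {p | ∑ i, p i = 1} := by
    ext p; simp [simplex, forall_and, Set.mem_iInter]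
  rw [this]
  refine ((MeasurableSet.iInter fun i => ?_).inter ?_)
  · exact ((measurable_pi_apply i) measurableSet_Ioi).inter ((measurable_pi_apply i) measurableSet_Iic)
  · exact measurableSet_eq_fun (Finset.measurable_sum _ fun j _ => measurable_pi_apply j) measurable_const

lemma RWDE.isProbabilityMeasure_dirichlet (α : ι → ℝ) (hα : ∀ i, 0 < α i) :
    IsProbabilityMeasure (dirichlet α) := by
  haveI : ∀ i, IsProbabilityMeasure (gammaMeasure (α i) 1) :=
    fun i => isProbabilityMeasure_gammaMeasure (hα i) one_pos
  exact Measure.isProbabilityMeasure_map RWDE.measurable_dirichletMap.aemeasurable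

lemma RWDE.dirichlet_simplex [Nonempty ι] (α : ι → ℝ) (hα : ∀ i, 0 < α i) :
    dirichlet α (simplex ι) = 1 := by
  haveI : ∀ i, IsProbabilityMeasure (gammaMeasure (α i) 1) :=
    fun i => isProbabilityMeasure_gammaMeasure (hα i) one_pos
  rw [dirichlet, Measure.map_apply RWDE.measurable_dirichletMap RWDE.measurableSet_simplex]
  have hae : ∀ᵐ z ∂(Measure.pi fun i => gammaMeasure (α i) 1),
      z ∈ (fun (z : ι → ℝ) (i : ι) => z i / ∑ j, z j) ⁻¹' simplex ι := by
    filter_upwards [RWDE.ae_pi_gamma_pos α hα] with z hz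
    have hS : 0 < ∑ j, z j := Finset.sum_pos (fun j _ => hz j) Finset.univ_nonempty
    constructor
    · intro i
      constructor
      · exact div_pos (hz i) hS
      · rw [div_le_one hS]
        exact Finset.single_le_sum (fun j _ => (hz j).le) (Finset.mem_univ i)
    · rw [← Finset.sum_div, div_self hS.ne']
  rw [← prob_compl_eq_zero_iff (RWDE.measurable_dirichletMap RWDE.measurableSet_simplex)]
  have h0 := hae
  rw [MeasureTheory.ae_iff] at h0
  convert h0 using 2
  rfl

lemma RWDE.lintegral_inv_dirichlet_lt_top [Nonempty ι] (α : ι → ℝ) (hα : ∀ i, 0 < α i) {i₀ : ι}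
    (hi₀ : 1 < α i₀) :
    ∫⁻ p, ENNReal.ofReal (p i₀)⁻¹ ∂dirichlet α < ⊤ := by
  classical
  haveI : ∀ i, IsProbabilityMeasure (gammaMeasure (α i) 1) :=
    fun i => isProbabilityMeasure_gammaMeasure (hα i) one_pos
  set γ : ι → Measure ℝ := fun i => gammaMeasure (α i) 1 with hγ
  have hF : Measurable fun p : ι → ℝ => ENNReal.ofReal (p i₀)⁻¹ :=
    ((measurable_pi_apply i₀).inv).ennreal_ofReal
  rw [dirichlet, lintegral_map hF RWDE.measurable_dirichletMap]
  set g : ι → ι → ℝ → ENNReal := fun j k x =>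
    (if k = j then ENNReal.ofReal x else 1) * (if k = i₀ then ENNReal.ofReal x⁻¹ else 1)
    with hg
  have hprod : ∀ j (z : ι → ℝ), ∏ k, g j k (z k)
      = ENNReal.ofReal (z j) * ENNReal.ofReal (z i₀)⁻¹ := by
    intro j z
    rw [hg]
    simp only [Finset.prod_mul_distrib]
    rw [Finset.prod_ite_eq' Finset.univ j (fun k => ENNReal.ofReal (z k)),
      Finset.prod_ite_eq' Finset.univ i₀ (fun k => ENNReal.ofReal (z k)⁻¹)]
    simp
  have hgm : ∀ j k, Measurable (g j k) := by
    intro j k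
    refine Measurable.mul ?_ ?_ <;> split <;>
      first
        | exact measurable_id.ennreal_ofReal
        | exact measurable_const
        | exact measurable_id.inv.ennreal_ofReal
  have key : ∫⁻ z, ENNReal.ofReal ((z i₀ / ∑ j, z j)⁻¹) ∂Measure.pi γ
      = ∫⁻ z, ∑ j, ∏ k, g j k (z k) ∂Measure.pi γ := by
    refine lintegral_congr_ae ?_
    filter_upwards [RWDE.ae_pi_gamma_pos α hα] with z hz
    have hS : 0 < ∑ j, z j := Finset.sum_pos (fun j _ => hz j) Finset.univ_nonempty
    have : (z i₀ / ∑ j, z j)⁻¹ = ∑ j, z j * (z i₀)⁻¹ := by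
      rw [← Finset.sum_mul, inv_div, div_eq_mul_inv]
    rw [this, ENNReal.ofReal_sum_of_nonneg
      (fun j _ => mul_nonneg (hz j).le (inv_nonneg.mpr (hz i₀).le))]
    refine Finset.sum_congr rfl fun j _ => ?_
    rw [ENNReal.ofReal_mul (hz j).le, hprod]
  have hmeas : ∀ j ∈ Finset.univ, Measurable fun z : ι → ℝ => ∏ k, g j k (z k) :=
    fun j _ => Finset.measurable_prod _ fun k _ => (hgm j k).comp (measurable_pi_apply k)
  rw [key, lintegral_finset_sum Finset.univ hmeas]
  refine (ENNReal.sum_lt_top).mpr fun j _ => ?_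
  rw [RWDE.lintegral_pi_prod γ (g j) (hgm j)]
  refine ENNReal.prod_lt_top fun k _ => ?_
  have hle1 : ∀ x : ℝ, ENNReal.ofReal x * ENNReal.ofReal x⁻¹ ≤ 1 := by
    intro x
    rcases le_or_gt x 0 with hx | hx
    · simp [ENNReal.ofReal_of_nonpos hx]
    · rw [← ENNReal.ofReal_mul hx.le, mul_inv_cancel₀ hx.ne']
      simp
  haveI : IsProbabilityMeasure (γ k) := isProbabilityMeasure_gammaMeasure (hα k) one_pos
  by_cases hkj : k = j <;> by_cases hki : k = i₀
  · subst hkj; subst hki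
    have hgf : g k k = fun x => ENNReal.ofReal x * ENNReal.ofReal x⁻¹ := by
      funext x; simp [hg]
    rw [hgf]
    refine lt_of_le_of_lt (lintegral_mono fun x => hle1 x) ?_
    simp [lintegral_one]
  · subst hkj
    have hgf : g k k = fun x => ENNReal.ofReal x := by funext x; simp [hg, hki]
    rw [hgf, hγ]
    exact RWDE.lintegral_ofReal_gamma_lt_top (hα k)
  · subst hki
    have hgf : g j k = fun x => ENNReal.ofReal x⁻¹ := by
      funext x; simp [hg, hkj]
    rw [hgf, hγ]
    exact RWDE.lintegral_ofReal_inv_gamma_lt_top hi₀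
  · have hgf : g j k = fun _ => 1 := by funext x; simp [hg, hkj, hki]
    rw [hgf]
    simp [lintegral_one]

end Aux

section IID

open MeasureTheory ProbabilityTheory RWDE

variable {d : ℕ}

lemma RWDE.map_restrict_eq_pi (α : Dir d → ℝ) (hα : ∀ i, 0 < α i) {μ : Measure (Env d)}
    (hμ : IsIIDDirichlet α μ) (s : Finset (V d)) :
    μ.map (fun ω (y : s) => ω y.1) = Measure.pi (fun _ : s => dirichlet α) := by
  classical
  haveI := RWDE.isProbabilityMeasure_dirichlet α hα
  have hπ : Measurable (fun (ω : Env d) (y : s) => ω y.1) :=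
    measurable_pi_lambda _ fun y => measurable_pi_apply _
  refine (Measure.pi_eq (μ := fun _ : s => dirichlet α) fun A hA => ?_).symm
  rw [Measure.map_apply hπ (MeasurableSet.univ_pi hA)]
  set A' : V d → Set (Dir d → ℝ) := fun x => if h : x ∈ s then A ⟨x, h⟩ else Set.univ with hA'
  have hset : (fun (ω : Env d) (y : s) => ω y.1) ⁻¹' (Set.univ.pi A)
      = {ω : Env d | ∀ x ∈ s, ω x ∈ A' x} := by
    ext ω
    simp only [Set.mem_preimage, Set.mem_pi, Set.mem_univ, true_implies, Set.mem_setOf_eq]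
    constructor
    · intro h x hx; simpa [hA', dif_pos hx] using h ⟨x, hx⟩
    · intro h y; have := h y.1 y.2; simpa [hA', dif_pos y.2] using this
  rw [hset, hμ.2 s A' (fun x hx => by
    simp only [hA', dif_pos hx]; exact hA ⟨x, hx⟩)]
  rw [← Finset.prod_coe_sort s (fun x => dirichlet α (A' x))]
  refine Finset.prod_congr rfl fun y _ => ?_
  simp only [hA', dif_pos y.2]

lemma RWDE.lintegral_prod_env (α : Dir d → ℝ) (hα : ∀ i, 0 < α i) {μ : Measure (Env d)}
    (hμ : IsIIDDirichlet α μ) (s : Finset (V d))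
    (F : (Dir d → ℝ) → ENNReal) (hF : Measurable F) :
    ∫⁻ ω, ∏ x ∈ s, F (ω x) ∂μ = ∏ x ∈ s, ∫⁻ p, F p ∂dirichlet α := by
  classical
  haveI := RWDE.isProbabilityMeasure_dirichlet α hα
  have hπ : Measurable (fun (ω : Env d) (y : s) => ω y.1) :=
    measurable_pi_lambda _ fun y => measurable_pi_apply _
  have hFk : Measurable fun v : s → (Dir d → ℝ) => ∏ y : s, F (v y) :=
    Finset.measurable_prod _ fun y _ => hF.comp (measurable_pi_apply y)
  calc ∫⁻ ω, ∏ x ∈ s, F (ω x) ∂μ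
      = ∫⁻ ω, (fun v : s → (Dir d → ℝ) => ∏ y : s, F (v y)) ((fun ω (y : s) => ω y.1) ω) ∂μ := by
        refine lintegral_congr fun ω => ?_
        exact (Finset.prod_coe_sort s (fun x => F (ω x))).symm
    _ = ∫⁻ v, ∏ y : s, F (v y) ∂(μ.map (fun ω (y : s) => ω y.1)) :=
        (lintegral_map hFk hπ).symm
    _ = ∏ y : s, ∫⁻ p, F p ∂dirichlet α := by
        rw [RWDE.map_restrict_eq_pi α hα hμ s]
        exact RWDE.lintegral_pi_prod (fun _ : s => dirichlet α) (fun _ => F) fun y => hF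
    _ = ∏ x ∈ s, ∫⁻ p, F p ∂dirichlet α :=
        Finset.prod_coe_sort s (fun _ => ∫⁻ p, F p ∂dirichlet α)

lemma RWDE.ae_env_simplex [Nonempty (Dir d)] (α : Dir d → ℝ) (hα : ∀ i, 0 < α i)
    {μ : Measure (Env d)} (hμ : IsIIDDirichlet α μ) :
    ∀ᵐ ω ∂μ, ∀ y : V d, ω y ∈ simplex (Dir d) := by
  haveI := hμ.1
  rw [MeasureTheory.ae_all_iff]
  intro y
  have hs := hμ.2 {y} (fun _ => simplex (Dir d)) (fun _ _ => RWDE.measurableSet_simplex)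
  simp only [Finset.mem_singleton, Finset.prod_singleton] at hs
  have hss : {ω : Env d | ∀ x, x = y → ω x ∈ simplex (Dir d)}
      = (fun ω : Env d => ω y) ⁻¹' simplex (Dir d) := by
    ext ω; simp only [Set.mem_preimage, Set.mem_setOf_eq]
    exact ⟨fun h => h y rfl, fun h x hx => hx ▸ h⟩
  rw [hss, RWDE.dirichlet_simplex α hα] at hs
  rw [MeasureTheory.ae_iff]
  have hcpl : {ω : Env d | ¬ ω y ∈ simplex (Dir d)}
      = ((fun ω : Env d => ω y) ⁻¹' simplex (Dir d))ᶜ := rfl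
  rw [hcpl, prob_compl_eq_zero_iff ((measurable_pi_apply y) RWDE.measurableSet_simplex)]
  exact hs

end IID

------------------------------------------------------------------------------
-- Quenched (pointwise) estimates
------------------------------------------------------------------------------

namespace RWDE

/-- Probability that the walk killed outside `U` survives `n` steps. -/
noncomputable def surv (d : ℕ) (ω : Env d) (U : Finset (V d)) : ℕ → V d → ℝ
  | 0, _ => 1
  | n+1, x => if x ∈ U then ∑ i, ω x i * surv d ω U n (x + e d i) else 0

variable {d : ℕ} {ω : Env d} {U : Finset (V d)}

lemma simplex_pos (hω : ∀ y, ω y ∈ simplex (Dir d)) (y : V d) (i : Dir d) : 0 < ω y i :=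
  ((hω y).1 i).1

lemma simplex_le_one (hω : ∀ y, ω y ∈ simplex (Dir d)) (y : V d) (i : Dir d) : ω y i ≤ 1 :=
  ((hω y).1 i).2

lemma simplex_sum (hω : ∀ y, ω y ∈ simplex (Dir d)) (y : V d) : ∑ i, ω y i = 1 :=
  (hω y).2

lemma surv_nonneg (hω : ∀ y, ω y ∈ simplex (Dir d)) : ∀ n x, 0 ≤ surv d ω U n x := by
  intro n
  induction n with
  | zero => intro x; exact zero_le_one
  | succ n ih =>
    intro x
    show 0 ≤ if x ∈ U then ∑ i, ω x i * surv d ω U n (x + e d i) else 0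
    split
    · exact Finset.sum_nonneg fun i _ => mul_nonneg (simplex_pos hω x i).le (ih _)
    · exact le_refl 0

lemma surv_le_one (hω : ∀ y, ω y ∈ simplex (Dir d)) : ∀ n x, surv d ω U n x ≤ 1 := by
  intro n
  induction n with
  | zero => intro x; exact le_refl 1
  | succ n ih =>
    intro x
    show (if x ∈ U then ∑ i, ω x i * surv d ω U n (x + e d i) else 0) ≤ 1
    split
    · calc ∑ i, ω x i * surv d ω U n (x + e d i)
          ≤ ∑ i, ω x i * 1 := Finset.sum_le_sum fun i _ =>
            mul_le_mul_of_nonneg_left (ih _) (simplex_pos hω x i).le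
        _ = 1 := by simp [simplex_sum hω x]
    · exact zero_le_one

lemma kernPow_le_surv (hω : ∀ y, ω y ∈ simplex (Dir d)) :
    ∀ n x y, kernPow d ω U n x y ≤ surv d ω U n x := by
  intro n
  induction n with
  | zero =>
    intro x y
    show (if x = y then (1:ℝ) else 0) ≤ 1
    split
    · exact le_refl 1
    · exact zero_le_one
  | succ n ih =>
    intro x y
    show (if x ∈ U then ∑ i, ω x i * kernPow d ω U n (x + e d i) y else 0)
        ≤ if x ∈ U then ∑ i, ω x i * surv d ω U n (x + e d i) else 0
    split
    · exact Finset.sum_le_sum fun i _ =>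
        mul_le_mul_of_nonneg_left (ih _ _) (simplex_pos hω x i).le
    · exact le_refl 0

lemma surv_succ_le (hω : ∀ y, ω y ∈ simplex (Dir d)) :
    ∀ n x, surv d ω U (n+1) x ≤ surv d ω U n x := by
  intro n
  induction n with
  | zero => intro x; exact surv_le_one hω 1 x
  | succ n ih =>
    intro x
    show (if x ∈ U then ∑ i, ω x i * surv d ω U (n+1) (x + e d i) else 0)
        ≤ if x ∈ U then ∑ i, ω x i * surv d ω U n (x + e d i) else 0
    split
    · exact Finset.sum_le_sum fun i _ =>
        mul_le_mul_of_nonneg_left (ih _) (simplex_pos hω x i).le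
    · exact le_refl 0

lemma surv_anti (hω : ∀ y, ω y ∈ simplex (Dir d)) {m n : ℕ} (h : m ≤ n) (x : V d) :
    surv d ω U n x ≤ surv d ω U m x := by
  induction h with
  | refl => exact le_refl _
  | step h ih => exact le_trans (surv_succ_le hω _ x) ih

lemma surv_escape (hω : ∀ y, ω y ∈ simplex (Dir d)) (i₀ : Dir d) :
    ∀ n x, (∃ m, m < n ∧ x + m • e d i₀ ∉ U) →
    surv d ω U n x ≤ 1 - ∏ k ∈ Finset.range n, ω (x + k • e d i₀) i₀ := by
  intro n
  induction n with
  | zero =>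
    rintro x ⟨m, hm, -⟩
    exact absurd hm (Nat.not_lt_zero m)
  | succ n ih =>
    rintro x ⟨m, hm, hout⟩
    have hprod_le_one : ∏ k ∈ Finset.range (n+1), ω (x + k • e d i₀) i₀ ≤ 1 :=
      Finset.prod_le_one (fun k _ => (simplex_pos hω _ i₀).le)
        (fun k _ => simplex_le_one hω _ i₀)
    by_cases hxU : x ∈ U
    · have hm0 : m ≠ 0 := by
        rintro rfl
        simp only [zero_smul, add_zero] at hout
        exact hout hxU
      obtain ⟨m', rfl⟩ := Nat.exists_eq_succ_of_ne_zero hm0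
      have hstep : ∀ k : ℕ, x + (k + 1) • e d i₀ = (x + e d i₀) + k • e d i₀ := by
        intro k
        rw [add_nsmul, one_nsmul]
        abel
      have hIH := ih (x + e d i₀) ⟨m', Nat.lt_of_succ_lt_succ hm, by
        rw [← hstep m']; exact hout⟩
      show (if x ∈ U then ∑ i, ω x i * surv d ω U n (x + e d i) else 0) ≤ _
      rw [if_pos hxU]
      have hPnn : 0 ≤ ∏ k ∈ Finset.range n, ω ((x + e d i₀) + k • e d i₀) i₀ :=
        Finset.prod_nonneg fun k _ => (simplex_pos hω _ i₀).le
      calc ∑ i, ω x i * surv d ω U n (x + e d i)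
          ≤ ∑ i, ω x i * (1 - if i = i₀ then
              ∏ k ∈ Finset.range n, ω ((x + e d i₀) + k • e d i₀) i₀ else 0) := by
            refine Finset.sum_le_sum fun i _ => mul_le_mul_of_nonneg_left ?_
              (simplex_pos hω x i).le
            by_cases hii : i = i₀
            · subst hii
              simpa using hIH
            · simp only [if_neg hii, sub_zero]
              exact surv_le_one hω n _
        _ = 1 - ω x i₀ * ∏ k ∈ Finset.range n, ω ((x + e d i₀) + k • e d i₀) i₀ := by
            simp only [mul_sub, mul_one, Finset.sum_sub_distrib, simplex_sum hω x,
              mul_ite, mul_zero, Finset.sum_ite_eq' Finset.univ i₀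
                (fun i => ω x i * ∏ k ∈ Finset.range n, ω ((x + e d i₀) + k • e d i₀) i₀),
              Finset.mem_univ, if_true]
        _ = 1 - ∏ k ∈ Finset.range (n+1), ω (x + k • e d i₀) i₀ := by
            congr 1
            rw [Finset.prod_range_succ']
            simp only [zero_smul, add_zero]
            rw [mul_comm]
            congr 1
            refine Finset.prod_congr rfl fun k _ => ?_
            rw [hstep k]
    · show (if x ∈ U then ∑ i, ω x i * surv d ω U n (x + e d i) else 0) ≤ _
      rw [if_neg hxU]
      linarith

lemma surv_chain (hω : ∀ y, ω y ∈ simplex (Dir d)) (N : ℕ) (θ : ℝ) (hθ0 : 0 ≤ θ)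
    (hN : ∀ y, surv d ω U N y ≤ θ) :
    ∀ a x, surv d ω U (a + N) x ≤ θ * surv d ω U a x := by
  intro a
  induction a with
  | zero =>
    intro x
    rw [Nat.zero_add]
    show surv d ω U N x ≤ θ * surv d ω U 0 x
    simpa [surv] using hN x
  | succ a ih =>
    intro x
    rw [Nat.succ_add]
    show (if x ∈ U then ∑ i, ω x i * surv d ω U (a + N) (x + e d i) else 0)
        ≤ θ * if x ∈ U then ∑ i, ω x i * surv d ω U a (x + e d i) else 0
    split
    · rw [Finset.mul_sum]
      refine Finset.sum_le_sum fun i _ => ?_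
      calc ω x i * surv d ω U (a + N) (x + e d i)
          ≤ ω x i * (θ * surv d ω U a (x + e d i)) :=
            mul_le_mul_of_nonneg_left (ih _) (simplex_pos hω x i).le
        _ = θ * (ω x i * surv d ω U a (x + e d i)) := by ring
    · simp

lemma surv_geom (hω : ∀ y, ω y ∈ simplex (Dir d)) (N : ℕ) (θ : ℝ) (hθ0 : 0 ≤ θ)
    (hN : ∀ y, surv d ω U N y ≤ θ) (z₀ : V d) :
    ∀ m, surv d ω U (m * N) z₀ ≤ θ ^ m := by
  intro m
  induction m with
  | zero => simp [surv]
  | succ m ih =>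
    have : (m + 1) * N = m * N + N := by ring
    rw [this]
    calc surv d ω U (m * N + N) z₀ ≤ θ * surv d ω U (m * N) z₀ :=
          surv_chain hω N θ hθ0 hN (m * N) z₀
      _ ≤ θ * θ ^ m := mul_le_mul_of_nonneg_left ih hθ0
      _ = θ ^ (m + 1) := by ring

lemma e_apply_inj {d : ℕ} (i₀ : Dir d) {m m' : ℕ} (h : m • e d i₀ = m' • e d i₀) : m = m' := by
  cases i₀ with
  | inl j =>
    have h2 : (m : ℤ) = m' := by
      have := congrFun h j
      simpa [e, nsmul_eq_mul] using this
    exact_mod_cast h2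
  | inr j =>
    have h2 : (m : ℤ) = m' := by
      have := congrFun h j
      simp only [Pi.smul_apply, e, Pi.neg_apply, Pi.single_eq_same, nsmul_eq_mul,
        mul_neg, mul_one, neg_inj] at this
      simpa [nsmul_eq_mul] using this
    exact_mod_cast h2

lemma exists_exit {d : ℕ} (U : Finset (V d)) (i₀ : Dir d) (x : V d) :
    ∃ m, m < U.card + 1 ∧ x + m • e d i₀ ∉ U := by
  by_contra h
  push_neg at h
  have hmem : ∀ m : Fin (U.card + 1), x + (m : ℕ) • e d i₀ ∈ U := fun m =>
    h (m : ℕ) m.isLt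
  have hinj : Function.Injective (fun m : Fin (U.card + 1) =>
      (⟨x + (m : ℕ) • e d i₀, hmem m⟩ : {y // y ∈ U})) := by
    intro m m' hmm
    have : x + (m : ℕ) • e d i₀ = x + (m' : ℕ) • e d i₀ := congrArg Subtype.val hmm
    have := add_left_cancel this
    exact Fin.ext (e_apply_inj i₀ this)
  have hcard := Fintype.card_le_of_injective _ hinj
  simp only [Fintype.card_fin, Fintype.card_coe] at hcard
  omega


lemma greenE_le (i₀ : Dir d) (z₀ : V d) (hz₀ : z₀ ∈ U)
    (hω : ∀ y, ω y ∈ simplex (Dir d)) :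
    greenE d ω U z₀ z₀ ≤ ((U.card + 1 : ℕ) : ENNReal) *
      ∑ x ∈ U, (ENNReal.ofReal
        (∏ k ∈ Finset.range (U.card + 1), ω (x + k • e d i₀) i₀))⁻¹ := by
  classical
  set N := U.card + 1 with hN
  set q : V d → ℝ := fun x => ∏ k ∈ Finset.range N, ω (x + k • e d i₀) i₀ with hq
  have hU0 : U.Nonempty := ⟨z₀, hz₀⟩
  set qm : ℝ := U.inf' hU0 q with hqm
  have hq01 : ∀ x, 0 < q x ∧ q x ≤ 1 := fun x =>
    ⟨Finset.prod_pos fun k _ => simplex_pos hω _ i₀,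
      Finset.prod_le_one (fun k _ => (simplex_pos hω _ i₀).le)
        (fun k _ => simplex_le_one hω _ i₀)⟩
  have hqm0 : 0 < qm := (Finset.lt_inf'_iff hU0).mpr fun x _ => (hq01 x).1
  have hqm1 : qm ≤ 1 := le_trans (Finset.inf'_le q hz₀) (hq01 z₀).2
  set θ : ℝ := 1 - qm with hθ
  have hθ0 : 0 ≤ θ := by rw [hθ]; linarith
  have hsurvN : ∀ y, surv d ω U N y ≤ θ := by
    intro y
    by_cases hy : y ∈ U
    · refine le_trans (surv_escape hω i₀ N y (exists_exit U i₀ y)) ?_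
      rw [hθ]
      linarith [Finset.inf'_le q hy]
    · have h0 : surv d ω U N y = 0 := by
        show (if y ∈ U then _ else (0:ℝ)) = 0
        rw [if_neg hy]
      rw [h0]; exact hθ0
  have hbound : ∀ n, kernPow d ω U n z₀ z₀ ≤ θ ^ (n / N) := by
    intro n
    refine le_trans (kernPow_le_surv hω n z₀ z₀) ?_
    refine le_trans (surv_anti hω (Nat.div_mul_le_self n N) z₀) ?_
    exact surv_geom hω N θ hθ0 hsurvN z₀ (n / N)
  have h1 : greenE d ω U z₀ z₀ ≤ ∑' n, (ENNReal.ofReal θ) ^ (n / N) := by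
    rw [greenE]
    refine ENNReal.tsum_le_tsum fun n => ?_
    refine le_trans (ENNReal.ofReal_le_ofReal (hbound n)) ?_
    rw [ENNReal.ofReal_pow hθ0]
  haveI : NeZero N := ⟨Nat.succ_ne_zero _⟩
  set t := ENNReal.ofReal θ with ht
  have h2 : ∑' n, t ^ (n / N) = (N : ENNReal) * (1 - t)⁻¹ := by
    calc ∑' n : ℕ, t ^ (n / N)
        = ∑' p : ℕ × Fin N, t ^ ((((Nat.divModEquiv N).symm p) : ℕ) / N) :=
          ((Nat.divModEquiv N).symm.tsum_eq fun n => t ^ (n / N)).symm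
      _ = ∑' p : ℕ × Fin N, t ^ p.1 := by
          refine tsum_congr fun p => ?_
          congr 1
          show (p.1 * N + (p.2 : ℕ)) / N = p.1
          rw [add_comm, Nat.add_mul_div_right _ _ (Nat.pos_of_neZero N),
            Nat.div_eq_of_lt p.2.isLt, Nat.zero_add]
      _ = ∑' m : ℕ, ∑' r : Fin N, t ^ m := ENNReal.tsum_prod (f := fun m (_ : Fin N) => t ^ m)
      _ = ∑' m : ℕ, (N : ENNReal) * t ^ m := by
          refine tsum_congr fun m => ?_
          rw [tsum_fintype]
          simp [Finset.sum_const, nsmul_eq_mul]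
      _ = (N : ENNReal) * ∑' m, t ^ m := ENNReal.tsum_mul_left
      _ = (N : ENNReal) * (1 - t)⁻¹ := by rw [ENNReal.tsum_geometric]
  have h3 : 1 - t = ENNReal.ofReal qm := by
    rw [ht, hθ]
    rw [show (qm : ℝ) = 1 - (1 - qm) by ring]
    rw [ENNReal.ofReal_sub 1 (by linarith : (0:ℝ) ≤ 1 - qm), ENNReal.ofReal_one]
    rw [show (1:ℝ) - (1 - (1 - qm)) = 1 - qm by ring]
  have h4 : (ENNReal.ofReal qm)⁻¹ ≤ ∑ x ∈ U, (ENNReal.ofReal (q x))⁻¹ := by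
    obtain ⟨x', hx', hxe⟩ := Finset.exists_mem_eq_inf' hU0 q
    rw [hqm, hxe]
    exact Finset.single_le_sum (f := fun x => (ENNReal.ofReal (q x))⁻¹)
      (fun x _ => zero_le) hx'
  calc greenE d ω U z₀ z₀ ≤ ∑' n, t ^ (n / N) := h1
    _ = (N : ENNReal) * (1 - t)⁻¹ := h2
    _ = (N : ENNReal) * (ENNReal.ofReal qm)⁻¹ := by rw [h3]
    _ ≤ (N : ENNReal) * ∑ x ∈ U, (ENNReal.ofReal (q x))⁻¹ := mul_le_mul_right h4 _

end RWDE
/-- Lemma 3 (integrability of the Green function): if `α_i > 1` for some direction `i`, then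
for every finite connected `U ⊆ ℤ^d` and every `z₀ ∈ U`, the Green function `G_U^ω(z₀,z₀)`
is `μ`-almost surely finite and `E_μ[G_U^ω(z₀,z₀)] < ∞`. -/
theorem green_integrable (d : ℕ) (hd : 0 < d)
    (α : Dir d → ℝ) (hα : ∀ i, 0 < α i) (hone : ∃ i : Dir d, 1 < α i)
    (μ : Measure (Env d)) (hμ : IsIIDDirichlet α μ)
    (U : Finset (V d)) (hU : ConnectedFinset d U)
    (z₀ : V d) (hz₀ : z₀ ∈ U) :
    (∀ᵐ ω ∂μ, greenE d ω U z₀ z₀ < ⊤) ∧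
    ∫⁻ ω, greenE d ω U z₀ z₀ ∂μ < ⊤ := by
  classical
  haveI : Nonempty (Dir d) := ⟨Sum.inl ⟨0, hd⟩⟩
  obtain ⟨i₀, hi₀⟩ := hone
  haveI := hμ.1
  set N := U.card + 1 with hN
  set q : Env d → V d → ℝ :=
    fun ω x => ∏ k ∈ Finset.range N, ω (x + k • e d i₀) i₀ with hq
  have hae := RWDE.ae_env_simplex α hα hμ
  set F : (Dir d → ℝ) → ENNReal := fun p => ENNReal.ofReal (p i₀)⁻¹ with hF
  have hFm : Measurable F := ((measurable_pi_apply i₀).inv).ennreal_ofReal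
  have hqpos : ∀ (ω : Env d), (∀ y, ω y ∈ simplex (Dir d)) → ∀ x, 0 < q ω x :=
    fun ω hω x => Finset.prod_pos fun k _ => RWDE.simplex_pos hω _ i₀
  have hq_eq : ∀ (ω : Env d), (∀ y, ω y ∈ simplex (Dir d)) → ∀ x,
      (ENNReal.ofReal (q ω x))⁻¹ = ∏ k ∈ Finset.range N, F (ω (x + k • e d i₀)) := by
    intro ω hω x
    rw [← ENNReal.ofReal_inv_of_pos (hqpos ω hω x), hq]
    rw [show (∏ k ∈ Finset.range N, ω (x + k • e d i₀) i₀)⁻¹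
        = ∏ k ∈ Finset.range N, (ω (x + k • e d i₀) i₀)⁻¹ from
      (Finset.prod_inv_distrib _).symm]
    rw [ENNReal.ofReal_prod_of_nonneg
      (fun k _ => inv_nonneg.mpr (RWDE.simplex_pos hω _ i₀).le)]
  set B : Env d → ENNReal := fun ω =>
    (N : ENNReal) * ∑ x ∈ U, ∏ k ∈ Finset.range N, F (ω (x + k • e d i₀)) with hB
  have hgb : ∀ᵐ ω ∂μ, greenE d ω U z₀ z₀ ≤ B ω := by
    filter_upwards [hae] with ω hω
    refine le_trans (RWDE.greenE_le i₀ z₀ hz₀ hω) ?_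
    rw [hB]
    exact le_of_eq (congrArg _ (Finset.sum_congr rfl fun x _ => hq_eq ω hω x))
  constructor
  · filter_upwards [hae] with ω hω
    refine lt_of_le_of_lt (RWDE.greenE_le i₀ z₀ hz₀ hω) ?_
    refine ENNReal.mul_lt_top (by simp) ?_
    refine (ENNReal.sum_lt_top).mpr fun x _ => ?_
    exact ENNReal.inv_lt_top.mpr (ENNReal.ofReal_pos.mpr (hqpos ω hω x))
  · have hBm : ∀ x ∈ U, Measurable fun ω : Env d =>
        ∏ k ∈ Finset.range N, F (ω (x + k • e d i₀)) :=
      fun x _ => Finset.measurable_prod _ fun k _ => hFm.comp (measurable_pi_apply _)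
    have hM : ∫⁻ p, F p ∂dirichlet α < ⊤ := RWDE.lintegral_inv_dirichlet_lt_top α hα hi₀
    calc ∫⁻ ω, greenE d ω U z₀ z₀ ∂μ
        ≤ ∫⁻ ω, B ω ∂μ := lintegral_mono_ae hgb
      _ = (N : ENNReal) * ∑ x ∈ U, ∫⁻ ω, ∏ k ∈ Finset.range N, F (ω (x + k • e d i₀)) ∂μ := by
          rw [hB]
          rw [lintegral_const_mul _ (Finset.measurable_sum _ hBm)]
          rw [lintegral_finset_sum _ hBm]
      _ < ⊤ := by
          refine ENNReal.mul_lt_top (by simp) ?_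
          refine (ENNReal.sum_lt_top).mpr fun x _ => ?_
          have hinj : Set.InjOn (fun k : ℕ => x + k • e d i₀) (Finset.range N) := by
            intro k _ k' _ hkk
            exact RWDE.e_apply_inj i₀ (add_left_cancel hkk)
          have himg : ∀ ω : Env d, ∏ k ∈ Finset.range N, F (ω (x + k • e d i₀))
              = ∏ z ∈ (Finset.range N).image (fun k => x + k • e d i₀), F (ω z) :=
            fun ω => by rw [Finset.prod_image (fun k hk k' hk' h => hinj hk hk' h)]
          calc ∫⁻ ω, ∏ k ∈ Finset.range N, F (ω (x + k • e d i₀)) ∂μ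
              = ∫⁻ ω, ∏ z ∈ (Finset.range N).image (fun k => x + k • e d i₀), F (ω z) ∂μ :=
                lintegral_congr fun ω => himg ω
            _ = ∏ z ∈ (Finset.range N).image (fun k => x + k • e d i₀),
                  ∫⁻ p, F p ∂dirichlet α :=
                RWDE.lintegral_prod_env α hα hμ _ F hFm
            _ < ⊤ := ENNReal.prod_lt_top fun z _ => hM
end

section
/- Let m ∈ T_{2d} and define s ∈ T_{2d} by s_{e_i} = s_{−e_i} = √(m_{e_i} m_{−e_i}) / k_m for i = 1,…,d, where k_m = 2∑_{i=1}^d √(m_{e_i} m_{−e_i}). Then for every n ≥ 0 and all x, y ∈ ℤ^d, p_m^{(n)}(x,y) = k_m^n · φ_m(y − x) · p_s^{(n)}(x,y). Consequently, for every δ ∈ (0,1] with δ k_m < 1, G_δ^m(x,y) = φ_m(y − x) · G_{δ k_m}^s(x,y). -/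
open MeasureTheory ProbabilityTheory Filter Topology

open RWDE MeasureTheory Filter Topology

private lemma phi_sub_single (d : ℕ) (m : Dir d → ℝ) (hm : ∀ i, 0 < m i) (z : V d) (j : Fin d) :
    phi d m (z - Pi.single j 1) =
      phi d m z * (Real.sqrt (m (Sum.inl j) / m (Sum.inr j)))⁻¹ := by
  have ha : ∀ k : Fin d, (0:ℝ) < Real.sqrt (m (Sum.inl k) / m (Sum.inr k)) :=
    fun k => Real.sqrt_pos.2 (div_pos (hm _) (hm _))
  unfold phi
  have hstep : ∀ k : Fin d,
      Real.sqrt (m (Sum.inl k) / m (Sum.inr k)) ^ ((z - Pi.single j 1 : V d) k)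
        = Real.sqrt (m (Sum.inl k) / m (Sum.inr k)) ^ (z k) *
          (if k = j then (Real.sqrt (m (Sum.inl j) / m (Sum.inr j)))⁻¹ else 1) := by
    intro k
    by_cases h : k = j
    · subst h
      simp [Pi.sub_apply, Pi.single_apply, zpow_sub_one₀ (ne_of_gt (ha k))]
    · simp [Pi.sub_apply, Pi.single_apply, h]
  rw [Finset.prod_congr rfl (fun k _ => hstep k), Finset.prod_mul_distrib]
  simp

private lemma phi_add_single (d : ℕ) (m : Dir d → ℝ) (hm : ∀ i, 0 < m i) (z : V d) (j : Fin d) :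
    phi d m (z + Pi.single j 1) =
      phi d m z * Real.sqrt (m (Sum.inl j) / m (Sum.inr j)) := by
  have ha : ∀ k : Fin d, (0:ℝ) < Real.sqrt (m (Sum.inl k) / m (Sum.inr k)) :=
    fun k => Real.sqrt_pos.2 (div_pos (hm _) (hm _))
  unfold phi
  have hstep : ∀ k : Fin d,
      Real.sqrt (m (Sum.inl k) / m (Sum.inr k)) ^ ((z + Pi.single j 1 : V d) k)
        = Real.sqrt (m (Sum.inl k) / m (Sum.inr k)) ^ (z k) *
          (if k = j then Real.sqrt (m (Sum.inl j) / m (Sum.inr j)) else 1) := by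
    intro k
    by_cases h : k = j
    · subst h
      simp [Pi.add_apply, Pi.single_apply, zpow_add_one₀ (ne_of_gt (ha k))]
    · simp [Pi.add_apply, Pi.single_apply, h]
  rw [Finset.prod_congr rfl (fun k _ => hstep k), Finset.prod_mul_distrib]
  simp

private lemma phi_zero (d : ℕ) (m : Dir d → ℝ) : phi d m 0 = 1 := by
  unfold phi; simp

/-- Symmetrization identity (formula (5)): with `s_{±e_i} = √(m_{e_i}m_{-e_i})/k_m`,
`p_m^{(n)}(x,y) = k_m^n φ_m(y-x) p_s^{(n)}(x,y)` for all `n`, and consequently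
`G_δ^m(x,y) = φ_m(y-x) G_{δ k_m}^s(x,y)` whenever `δ k_m < 1`. -/
theorem homogeneous_walk_symmetrization (d : ℕ) (hd : 0 < d)
    (m : Dir d → ℝ) (hm : m ∈ simplex (Dir d)) :
    let km : ℝ := 2 * ∑ i : Fin d, Real.sqrt (m (Sum.inl i) * m (Sum.inr i))
    let s : Dir d → ℝ := fun i =>
      Real.sqrt (m (Sum.inl (Sum.elim id id i)) * m (Sum.inr (Sum.elim id id i))) / km
    (∀ (n : ℕ) (x y : V d),
        walkPow d (fun _ => m) n x y
          = km ^ n * phi d m (y - x) * walkPow d (fun _ => s) n x y) ∧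
    ∀ δ : ℝ, 0 < δ → δ ≤ 1 → δ * km < 1 →
      ∀ x y : V d,
        greenW d (fun _ => m) δ x y
          = phi d m (y - x) * greenW d (fun _ => s) (δ * km) x y := by
  intro km s
  have hmpos : ∀ i, 0 < m i := fun i => (hm.1 i).1
  haveI : Nonempty (Fin d) := ⟨⟨0, hd⟩⟩
  have hkm : 0 < km := by
    unfold km
    have : (0:ℝ) < ∑ i : Fin d, Real.sqrt (m (Sum.inl i) * m (Sum.inr i)) := by
      apply Finset.sum_pos
      · intro i _
        exact Real.sqrt_pos.2 (mul_pos (hmpos _) (hmpos _))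
      · exact Finset.univ_nonempty.{0} (α := Fin d)
    linarith
  have hkm' : km ≠ 0 := ne_of_gt hkm
  have key : ∀ (z : V d) (i : Dir d),
      m i * phi d m (z - e d i) = km * phi d m z * s i := by
    intro z i
    obtain (j | j) := i
    · rw [show e d (Sum.inl j) = Pi.single j 1 from rfl,
        phi_sub_single d m hmpos z j]
      have hs : s (Sum.inl j) = Real.sqrt (m (Sum.inl j) * m (Sum.inr j)) / km := rfl
      rw [hs]
      have hA : (0:ℝ) < Real.sqrt (m (Sum.inl j)) := Real.sqrt_pos.2 (hmpos _)
      have hB : (0:ℝ) < Real.sqrt (m (Sum.inr j)) := Real.sqrt_pos.2 (hmpos _)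
      have h1 : Real.sqrt (m (Sum.inl j) / m (Sum.inr j)) =
          Real.sqrt (m (Sum.inl j)) / Real.sqrt (m (Sum.inr j)) :=
        Real.sqrt_div (le_of_lt (hmpos _)) _
      have h2 : Real.sqrt (m (Sum.inl j) * m (Sum.inr j)) =
          Real.sqrt (m (Sum.inl j)) * Real.sqrt (m (Sum.inr j)) :=
        Real.sqrt_mul (le_of_lt (hmpos _)) _
      have h3 : m (Sum.inl j) = Real.sqrt (m (Sum.inl j)) ^ 2 :=
        (Real.sq_sqrt (le_of_lt (hmpos _))).symm
      rw [h1, h2]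
      have hid : m (Sum.inl j) *
          (Real.sqrt (m (Sum.inl j)) / Real.sqrt (m (Sum.inr j)))⁻¹
            = Real.sqrt (m (Sum.inl j)) * Real.sqrt (m (Sum.inr j)) := by
        field_simp
        linear_combination h3
      have hc : km * phi d m z *
          (Real.sqrt (m (Sum.inl j)) * Real.sqrt (m (Sum.inr j)) / km)
            = phi d m z * (Real.sqrt (m (Sum.inl j)) * Real.sqrt (m (Sum.inr j))) := by
        field_simp
      rw [hc]
      linear_combination phi d m z * hid
    · rw [show z - e d (Sum.inr j) = z + Pi.single j 1 by
        show z - (-Pi.single j 1) = _; rw [sub_neg_eq_add],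
        phi_add_single d m hmpos z j]
      have hs : s (Sum.inr j) = Real.sqrt (m (Sum.inl j) * m (Sum.inr j)) / km := rfl
      rw [hs]
      have hA : (0:ℝ) < Real.sqrt (m (Sum.inl j)) := Real.sqrt_pos.2 (hmpos _)
      have hB : (0:ℝ) < Real.sqrt (m (Sum.inr j)) := Real.sqrt_pos.2 (hmpos _)
      have h1 : Real.sqrt (m (Sum.inl j) / m (Sum.inr j)) =
          Real.sqrt (m (Sum.inl j)) / Real.sqrt (m (Sum.inr j)) :=
        Real.sqrt_div (le_of_lt (hmpos _)) _
      have h2 : Real.sqrt (m (Sum.inl j) * m (Sum.inr j)) =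
          Real.sqrt (m (Sum.inl j)) * Real.sqrt (m (Sum.inr j)) :=
        Real.sqrt_mul (le_of_lt (hmpos _)) _
      have h3 : m (Sum.inr j) = Real.sqrt (m (Sum.inr j)) ^ 2 :=
        (Real.sq_sqrt (le_of_lt (hmpos _))).symm
      rw [h1, h2]
      have hid : m (Sum.inr j) *
          (Real.sqrt (m (Sum.inl j)) / Real.sqrt (m (Sum.inr j)))
            = Real.sqrt (m (Sum.inl j)) * Real.sqrt (m (Sum.inr j)) := by
        field_simp
        linear_combination h3
      have hc : km * phi d m z *
          (Real.sqrt (m (Sum.inl j)) * Real.sqrt (m (Sum.inr j)) / km)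
            = phi d m z * (Real.sqrt (m (Sum.inl j)) * Real.sqrt (m (Sum.inr j))) := by
        field_simp
      rw [hc]
      linear_combination phi d m z * hid
  have main : ∀ (n : ℕ) (x y : V d),
      walkPow d (fun _ => m) n x y
        = km ^ n * phi d m (y - x) * walkPow d (fun _ => s) n x y := by
    intro n
    induction n with
    | zero =>
      intro x y
      simp only [walkPow]
      by_cases h : x = y
      · subst h; simp [phi_zero]
      · simp [h]
    | succ n ih =>
      intro x y
      simp only [walkPow]
      rw [Finset.mul_sum]
      refine Finset.sum_congr rfl fun i _ => ?_
      rw [ih (x + e d i) y]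
      have hz : y - (x + e d i) = (y - x) - e d i := by ring
      rw [hz]
      have := key (y - x) i
      calc m i * (km ^ n * phi d m (y - x - e d i) * walkPow d (fun _ => s) n (x + e d i) y)
          = (m i * phi d m (y - x - e d i)) * (km ^ n * walkPow d (fun _ => s) n (x + e d i) y) := by
            ring
        _ = (km * phi d m (y - x) * s i) * (km ^ n * walkPow d (fun _ => s) n (x + e d i) y) := by
            rw [this]
        _ = km ^ (n + 1) * phi d m (y - x) * (s i * walkPow d (fun _ => s) n (x + e d i) y) := by
            ring
  refine ⟨main, ?_⟩
  intro δ _ _ _ x y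
  unfold greenW
  rw [← tsum_mul_left]
  refine tsum_congr fun n => ?_
  rw [main n x y, mul_pow]
  ring
end
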